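/- arXiv:0909.4095 — 4 statements merged into one kernel-verified Lean document; each statement's English description precedes it below -/
import Mathlib

section
/- Let n ≥ 0 and let X be a metric space. Suppose that for every ε > 0 there exists δ > 0 such that: for every set S, every simplicial complex K ⊆ Δ(S), every subset A ⊆ X, and every δ-partition of unity f: X → K with f(A) ⊆ K^(n), there exists a map h: X → K^(n) which agrees with f on A, satisfies supp(h(x)) ⊆ supp(f(x)) for all x ∈ X, and is an ε-partition of unity. If X is large scale paracompact, then X has asymptotic dimension at most n. -/
open Function Metric ENNReal

noncomputable section

/-- `ℓ¹(S)`: real-valued functions on `S` with finite `ℓ¹`-norm, with the `ℓ¹` metric. -/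
abbrev ellOne (S : Type u) : Type u := lp (fun _ : S => ℝ) 1

/-- The full simplex `Δ(S) ⊆ ℓ¹(S)`. -/
def fullSimplex (S : Type u) : Set (ellOne S) :=
  {p | (∀ s, 0 ≤ p s) ∧ (support (p : S → ℝ)).Finite ∧ ∑' s, p s = 1}

/-- The `n`-skeleton `Δ(S)^(n)` of the full simplex. -/
def skeleton (S : Type u) (n : ℕ) : Set (ellOne S) :=
  {p ∈ fullSimplex S | (support (p : S → ℝ)).encard ≤ n + 1}

/-- A simplicial complex on `S`: a subset of `Δ(S)` closed under passing to
points whose support is contained in the support of a member. -/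
def IsSimplicialComplex {S : Type u} (K : Set (ellOne S)) : Prop :=
  K ⊆ fullSimplex S ∧
    ∀ p ∈ K, ∀ q ∈ fullSimplex S,
      support (q : S → ℝ) ⊆ support (p : S → ℝ) → q ∈ K

/-- The star of a vertex `v` in `K`. -/
def star {S : Type u} (K : Set (ellOne S)) (v : S) : Set (ellOne S) :=
  {p ∈ K | 0 < p v}

/-- `f` is `(λ, C)`-Lipschitz. -/
def IsLipschitzLC {X Y : Type*} [MetricSpace X] [MetricSpace Y]
    (l C : ℝ) (f : X → Y) : Prop :=
  ∀ x y, dist (f x) (f y) ≤ l * dist x y + C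

/-- A family of sets is uniformly bounded. -/
def UniformlyBounded {X : Type*} [MetricSpace X] {ι : Type*} (U : ι → Set X) : Prop :=
  ∃ M : ℝ, ∀ i, ∀ x ∈ U i, ∀ y ∈ U i, dist x y ≤ M

/-- `U` is a cover of the whole space. -/
def IsCover {X : Type*} {ι : Type*} (U : ι → Set X) : Prop := ∀ x, ∃ i, x ∈ U i

/-- The Lebesgue number `inf_x sup_i dist(x, X∖Uᵢ)` of a family, as a value in `ℝ≥0∞`. -/
def lebesgue {X : Type*} [MetricSpace X] {ι : Type*} (U : ι → Set X) : ℝ≥0∞ :=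
  ⨅ x : X, ⨆ i, EMetric.infEdist x (U i)ᶜ

/-- The multiplicity of `U` is at most `m`. -/
def MultiplicityLE {X : Type*} [MetricSpace X] {ι : Type*} (U : ι → Set X) (m : ℕ) : Prop :=
  ∀ x : X, {i | 0 < Metric.infDist x ((U i)ᶜ)}.encard ≤ m

/-- `f : X → K` is a `δ`-partition of unity. -/
def IsDeltaPartitionOfUnity {X : Type*} [MetricSpace X] {S : Type u}
    (δ : ℝ) (K : Set (ellOne S)) (f : X → ellOne S) : Prop :=
  (∀ x, f x ∈ K) ∧ IsLipschitzLC δ δ f ∧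
    UniformlyBounded (fun v : S => f ⁻¹' star K v) ∧
    ENNReal.ofReal (1 / δ) ≤ lebesgue (fun v : S => f ⁻¹' star K v)

/-- `X` is large scale paracompact. -/
def LSParacompact (X : Type u) [MetricSpace X] : Prop :=
  ∀ (ι : Type u) (U : ι → Set X), IsCover U → UniformlyBounded U →
    ∀ l C : ℝ, 0 < l → 0 < C →
      ∃ (S : Type u) (K : Set (ellOne S)) (f : X → ellOne S),
        IsSimplicialComplex K ∧ (∀ x, f x ∈ K) ∧ IsLipschitzLC l C f ∧
        UniformlyBounded (fun v : S => f ⁻¹' star K v) ∧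
        ∀ i, ∃ v : S, U i ⊆ f ⁻¹' star K v

/-- `X` has asymptotic dimension at most `n`. -/
def AsdimLE (X : Type u) [MetricSpace X] (n : ℕ) : Prop :=
  ∀ R : ℝ, 0 < R → ∃ (ι : Type u) (U : ι → Set X),
    IsCover U ∧ UniformlyBounded U ∧ MultiplicityLE U (n + 1) ∧
    ENNReal.ofReal R ≤ lebesgue U

/-- `X` has Property A. -/
def PropertyA (X : Type u) [MetricSpace X] : Prop :=
  ∀ R ε : ℝ, 0 < R → 0 < ε →
    ∃ (M : ℝ) (S : Type u) (φ : S → X → ℝ), 0 < M ∧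
      (∀ s x, 0 ≤ φ s x ∧ φ s x ≤ 1) ∧
      (∀ x, (support fun s => φ s x).Finite) ∧
      (∀ x, ∑' s, φ s x = 1) ∧
      (∀ x y, dist x y ≤ R → ∑' s, |φ s x - φ s y| < ε) ∧
      (∀ s, ∀ x ∈ support (φ s), ∀ y ∈ support (φ s), dist x y ≤ M)

/-- `f` has `(R, ε)` variation. -/
def HasVariation {X Y : Type*} [MetricSpace X] [MetricSpace Y] (R ε : ℝ) (f : X → Y) : Prop :=
  ∀ x y, dist x y ≤ R → dist (f x) (f y) < ε

/-- `g` is a coarse embedding. -/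
def CoarseEmbedding {X Y : Type*} [MetricSpace X] [MetricSpace Y] (g : X → Y) : Prop :=
  ∃ ρminus ρplus : ℝ → ℝ, Monotone ρminus ∧ Monotone ρplus ∧
    Filter.Tendsto ρminus Filter.atTop Filter.atTop ∧
    ∀ x y, ρminus (dist x y) ≤ dist (g x) (g y) ∧ dist (g x) (g y) ≤ ρplus (dist x y)

/-- `X` has bounded geometry: balls of any fixed radius have uniformly bounded cardinality. -/
def BoundedGeometry (X : Type*) [MetricSpace X] : Prop :=
  ∀ r : ℝ, 0 < r → ∃ N : ℕ, ∀ x : X, (Metric.ball x r).encard ≤ N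

/-!
Large scale paracompactness, applied to the cover by balls of radius `1/δ`, yields a
`δ`-partition of unity `f`. Filling `f` with `A = ∅` and `ε = 1/R` gives a `(1/R)`-partition of
unity `h` into the `n`-skeleton: the sets `h⁻¹(st v)` form a uniformly bounded cover with
Lebesgue number at least `R`, and a point lies in at most `n + 1` of them since `h x` has at most
`n + 1` vertices in its support.
-/

section Balls

variable {X : Type*} [MetricSpace X]

theorem uniformlyBounded_ball (r : ℝ) : UniformlyBounded (fun x : X => ball x r) :=
  ⟨2 * r, fun c x hx y hy => by
    calc dist x y ≤ dist x c + dist y c := dist_triangle_right x y c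
      _ ≤ 2 * r := by linarith [mem_ball.mp hx, mem_ball.mp hy]⟩

theorem isCover_ball {r : ℝ} (hr : 0 < r) : IsCover (fun x : X => ball x r) :=
  fun x => ⟨x, mem_ball_self hr⟩

theorem ofReal_le_lebesgue_of_ball_subset {ι : Type*} {U : ι → Set X} {r : ℝ}
    (hU : ∀ x, ∃ i, ball x r ⊆ U i) : ENNReal.ofReal r ≤ lebesgue U := by
  refine le_iInf fun x => ?_
  obtain ⟨i, hi⟩ := hU x
  refine le_iSup_of_le i (Metric.le_infEDist.mpr fun y hy => ?_)
  have hxy : r ≤ dist x y := by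
    simpa [dist_comm] using not_lt.mp fun h => hy (hi (mem_ball.mpr h))
  rw [edist_dist]
  exact ENNReal.ofReal_le_ofReal hxy

end Balls

section Stars

variable {X : Type*} {S : Type u}

theorem exists_pos_of_mem_fullSimplex {p : ellOne S} (hp : p ∈ fullSimplex S) :
    ∃ v, 0 < p v := by
  obtain ⟨hnonneg, -, hsum⟩ := hp
  by_contra! hle
  have hzero : ∀ v, p v = 0 := fun v => le_antisymm (hle v) (hnonneg v)
  simp [hzero] at hsum

theorem isCover_preimage_star {K : Set (ellOne S)} (hK : K ⊆ fullSimplex S)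
    {f : X → ellOne S} (hf : ∀ x, f x ∈ K) : IsCover (fun v => f ⁻¹' star K v) := fun x =>
  (exists_pos_of_mem_fullSimplex (hK (hf x))).imp fun _ hv => ⟨hf x, hv⟩

theorem multiplicityLE_preimage_star [MetricSpace X] (K : Set (ellOne S)) {f : X → ellOne S}
    {m : ℕ} (hf : ∀ x, (support (f x : S → ℝ)).encard ≤ m) :
    MultiplicityLE (fun v => f ⁻¹' star K v) m := by
  intro x
  refine le_trans (Set.encard_mono fun v hv => ?_) (hf x)
  have hx : x ∈ f ⁻¹' star K v := by
    by_contra hx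
    exact (infDist_zero_of_mem hx).not_gt hv
  exact hx.2.ne'

end Stars

theorem LSParacompact.exists_isDeltaPartitionOfUnity {X : Type u} [MetricSpace X]
    (hX : LSParacompact X) {δ : ℝ} (hδ : 0 < δ) :
    ∃ (S : Type u) (K : Set (ellOne S)) (f : X → ellOne S),
      IsSimplicialComplex K ∧ IsDeltaPartitionOfUnity δ K f := by
  obtain ⟨S, K, f, hK, hfK, hflip, hfub, hball⟩ :=
    hX X _ (isCover_ball (one_div_pos.mpr hδ)) (uniformlyBounded_ball (1 / δ)) δ δ hδ hδ
  exact ⟨S, K, f, hK, hfK, hflip, hfub, ofReal_le_lebesgue_of_ball_subset hball⟩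

/-- Theorem B: if fillers into the `n`-skeleton always exist as in
Theorem A and `X` is large scale paracompact, then `asdim X ≤ n`. -/
theorem theoremB (X : Type u) [MetricSpace X] (n : ℕ)
    (hfill : ∀ ε : ℝ, 0 < ε → ∃ δ : ℝ, 0 < δ ∧
      ∀ (S : Type u) (K : Set (ellOne S)) (A : Set X) (f : X → ellOne S),
        IsSimplicialComplex K → IsDeltaPartitionOfUnity δ K f →
        (∀ a ∈ A, f a ∈ K ∩ skeleton S n) →
        ∃ h : X → ellOne S,
          (∀ x, h x ∈ K ∩ skeleton S n) ∧
          (∀ a ∈ A, h a = f a) ∧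
          (∀ x, support ((h x : S → ℝ)) ⊆ support ((f x : S → ℝ))) ∧
          IsDeltaPartitionOfUnity ε K h)
    (hpara : LSParacompact X) : AsdimLE X n := by
  intro R hR
  obtain ⟨δ, hδ, hfillδ⟩ := hfill (1 / R) (one_div_pos.mpr hR)
  obtain ⟨S, K, f, hK, hf⟩ := hpara.exists_isDeltaPartitionOfUnity hδ
  obtain ⟨h, hskel, -, -, hhK, -, hhub, hhleb⟩ :=
    hfillδ S K ∅ f hK hf fun a ha => absurd ha (Set.notMem_empty a)
  refine ⟨S, fun v => h ⁻¹' star K v, isCover_preimage_star hK.1 hhK, hhub,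
    multiplicityLE_preimage_star K fun x => ?_, by rwa [one_div_one_div] at hhleb⟩
  exact_mod_cast (hskel x).2.2

end
end

section
/- Let n ≥ 0, λ > 0, C ≥ 0, let K ⊆ Δ(S) be a simplicial complex, and let f: X → K^(n) be a (λ,C)-Lipschitz map from a metric space X into the n-skeleton of K. Then the Lebesgue number of the cover {f⁻¹(st(v)) : v ∈ S} of X is at least R = (1 − (n+1)·C)/((n+1)·λ). -/
/-!
A point of the `n`-skeleton has at most `n + 1` nonzero barycentric coordinates summing to `1`,
so one of them, say at `v`, is at least `1 / (n + 1)`. Any `y` with `f y ∉ st(v)` has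
`f y v = 0`, hence `1 / (n + 1) ≤ ‖f x - f y‖₁ ≤ λ d(x, y) + C`, which rearranges to `R ≤ d(x, y)`.
-/

open Function Metric ENNReal

noncomputable section

theorem lp.dist_apply_le {α : Type*} {E : α → Type*} [∀ i, NormedAddCommGroup (E i)]
    {p : ℝ≥0∞} [Fact (1 ≤ p)] (f g : lp E p) (i : α) : dist (f i) (g i) ≤ dist f g := by
  simpa only [dist_eq_norm, lp.coeFn_sub, Pi.sub_apply] using
    lp.norm_apply_le_norm (zero_lt_one.trans_le Fact.out).ne' (f - g) i

theorem nonneg_of_mem_skeleton {S : Type u} {n : ℕ} {p : ellOne S} (hp : p ∈ skeleton S n)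
    (v : S) : 0 ≤ p v :=
  hp.1.1 v

theorem exists_inv_succ_le_of_mem_skeleton {S : Type u} {n : ℕ} {p : ellOne S}
    (hp : p ∈ skeleton S n) : ∃ v, 1 / (n + 1 : ℝ) ≤ p v := by
  obtain ⟨⟨-, hfin, hsum⟩, hcard⟩ := hp
  have hsum' : ∑ s ∈ hfin.toFinset, p s = 1 := by
    rw [← hsum, tsum_eq_sum' (s := hfin.toFinset) (by simp)]
  have hcard' : (hfin.toFinset.card : ℝ) ≤ n + 1 := by
    rw [hfin.encard_eq_coe_toFinset_card] at hcard
    exact_mod_cast hcard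
  obtain ⟨v, -, hv⟩ : ∃ v ∈ hfin.toFinset, 1 / (n + 1 : ℝ) ≤ p v := by
    refine Finset.exists_le_of_sum_le (Finset.nonempty_of_sum_ne_zero (hsum' ▸ one_ne_zero)) ?_
    rw [hsum', Finset.sum_const, nsmul_eq_mul, mul_one_div, div_le_one (by positivity)]
    exact hcard'
  exact ⟨v, hv⟩

theorem ofReal_le_lebesgue {X ι : Type*} [MetricSpace X] {U : ι → Set X} {r : ℝ}
    (h : ∀ x, ∃ i, ∀ y ∉ U i, r ≤ dist x y) : ENNReal.ofReal r ≤ lebesgue U := by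
  refine le_iInf fun x => ?_
  obtain ⟨i, hi⟩ := h x
  refine le_iSup_of_le i (Metric.le_infEDist.2 fun y hy => ?_)
  rw [edist_dist]
  exact ENNReal.ofReal_le_ofReal (hi y hy)

theorem lebesgue_of_lipschitz_map_general {X : Type*} [MetricSpace X] {S : Type u}
    (n : ℕ) (l C : ℝ) (hl : 0 < l)
    (K : Set (ellOne S))
    (f : X → ellOne S) (hf : ∀ x, f x ∈ K ∩ skeleton S n)
    (hLip : IsLipschitzLC l C f) :
    ENNReal.ofReal ((1 - (n + 1) * C) / ((n + 1) * l)) ≤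
      lebesgue (fun v : S => f ⁻¹' star K v) := by
  refine ofReal_le_lebesgue fun x => ?_
  obtain ⟨v, hv⟩ := exists_inv_succ_le_of_mem_skeleton (hf x).2
  refine ⟨v, fun y hy => ?_⟩
  have hyv : f y v = 0 :=
    le_antisymm (not_lt.1 fun h => hy ⟨(hf y).1, h⟩) (nonneg_of_mem_skeleton (hf y).2 v)
  have hxy : 1 / (n + 1 : ℝ) ≤ l * dist x y + C :=
    calc 1 / (n + 1 : ℝ) ≤ dist (f x v) (f y v) := by
          rwa [hyv, Real.dist_0_eq_abs, abs_of_nonneg (nonneg_of_mem_skeleton (hf x).2 v)]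
      _ ≤ dist (f x) (f y) := lp.dist_apply_le _ _ v
      _ ≤ l * dist x y + C := hLip x y
  rw [div_le_iff₀ (by positivity)]
  rw [div_le_iff₀ (by positivity)] at hxy
  linarith

/-- if `f : X → K^(n)` is `(λ, C)`-Lipschitz, then the Lebesgue number of
`{f⁻¹(st v)}` is at least `(1 − (n+1)·C)/((n+1)·λ)`. -/
theorem lebesgue_of_lipschitz_map {X : Type*} [MetricSpace X] {S : Type u}
    (n : ℕ) (l C : ℝ) (hl : 0 < l) (hC : 0 ≤ C)
    (K : Set (ellOne S)) (hK : IsSimplicialComplex K)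
    (f : X → ellOne S) (hf : ∀ x, f x ∈ K ∩ skeleton S n)
    (hLip : IsLipschitzLC l C f) :
    ENNReal.ofReal ((1 - (n + 1) * C) / ((n + 1) * l)) ≤
      lebesgue (fun v : S => f ⁻¹' star K v) :=
  lebesgue_of_lipschitz_map_general n l C hl K f hf hLip

end
end

section
/- Every metric space of finite asymptotic dimension is large scale paracompact. -/
open Function Metric ENNReal

noncomputable section

/-!
If `X` is bounded, the constant map to a single vertex will do. Otherwise take a uniformly bounded
cover `V` of multiplicity at most `n + 1` with Lebesgue number `> r`, where `r` exceeds both the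
diameters of the `U i` and `4 (n + 1) / λ`. The distances `x ↦ (dist (x, X ∖ V v))_v` form a point
of `ℓ¹` with at most `n + 1` nonzero, `1`-Lipschitz entries and norm `≥ r`. Normalizing onto the
simplex multiplies distances by at most `2 / r`, since `‖a/‖a‖ - b/‖b‖‖ ≤ 2 ‖a - b‖ / ‖b‖`, so the
resulting map is `4 (n + 1) / r ≤ λ`-Lipschitz. Its stars lie in the `V v`, and a set of diameter
`< r` lies in the star of any `v` with `dist (x, X ∖ V v) > r` at one of its points.
-/

namespace ellOne

variable {S : Type u}

def ofFiniteSupport (g : S → ℝ) (hg : (support g).Finite) : ellOne S :=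
  ⟨g, (memℓp_zero hg).of_exponent_ge zero_le_one⟩

@[simp]
lemma ofFiniteSupport_apply (g : S → ℝ) (hg : (support g).Finite) (s : S) :
    ofFiniteSupport g hg s = g s := rfl

lemma norm_eq_tsum_abs (p : ellOne S) : ‖p‖ = ∑' s, |p s| := by
  simp [lp.norm_eq_tsum_rpow (by norm_num : 0 < (1 : ℝ≥0∞).toReal), Real.norm_eq_abs]

lemma norm_le_ncard_mul {p : ellOne S} (hp : (support ⇑p).Finite) {ε : ℝ}
    (hε : ∀ s, |p s| ≤ ε) : ‖p‖ ≤ (support ⇑p).ncard * ε := by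
  rw [norm_eq_tsum_abs, tsum_eq_sum (s := hp.toFinset) fun s hs => by simpa using hs,
    Set.ncard_eq_toFinset_card _ hp]
  calc ∑ s ∈ hp.toFinset, |p s| ≤ ∑ _s ∈ hp.toFinset, ε := Finset.sum_le_sum fun s _ => hε s
    _ = hp.toFinset.card * ε := by rw [Finset.sum_const, nsmul_eq_mul]

lemma single_mem_fullSimplex [DecidableEq S] (v : S) : lp.single 1 v (1 : ℝ) ∈ fullSimplex S := by
  refine ⟨fun s => ?_, (Set.finite_singleton v).subset ?_, ?_⟩
  · by_cases h : s = v <;> simp [h]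
  · intro s hs
    by_contra h
    exact hs (lp.single_apply_ne 1 v 1 h)
  · simp [Pi.single_apply]

lemma inv_norm_smul_mem_fullSimplex {p : ellOne S} (hp : p ≠ 0) (hnonneg : ∀ s, 0 ≤ p s)
    (hfin : (support ⇑p).Finite) : ‖p‖⁻¹ • p ∈ fullSimplex S := by
  have hnorm : ‖p‖ = ∑' s, p s := by
    rw [norm_eq_tsum_abs]
    exact tsum_congr fun s => abs_of_nonneg (hnonneg s)
  refine ⟨fun s => mul_nonneg (inv_nonneg.2 (norm_nonneg p)) (hnonneg s),
    hfin.subset (support_const_smul_subset _ _), ?_⟩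
  simp only [lp.coeFn_smul, Pi.smul_apply, smul_eq_mul, tsum_mul_left, ← hnorm]
  exact inv_mul_cancel₀ (norm_ne_zero_iff.2 hp)

end ellOne

lemma fullSimplex_isSimplicialComplex (S : Type u) : IsSimplicialComplex (fullSimplex S) :=
  ⟨subset_rfl, fun _ _ _ hq _ => hq⟩

lemma norm_inv_norm_smul_sub_inv_norm_smul_le {E : Type*} [NormedAddCommGroup E]
    [NormedSpace ℝ E] (x : E) {y : E} (hy : y ≠ 0) :
    ‖‖x‖⁻¹ • x - ‖y‖⁻¹ • y‖ ≤ 2 * ‖x - y‖ / ‖y‖ := by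
  have hy' : 0 < ‖y‖ := norm_pos_iff.2 hy
  have hscale : ‖(‖x‖⁻¹ - ‖y‖⁻¹) • x‖ ≤ ‖x - y‖ / ‖y‖ := by
    rcases eq_or_ne x 0 with rfl | hx
    · simp only [smul_zero, norm_zero]
      positivity
    have hx' : 0 < ‖x‖ := norm_pos_iff.2 hx
    rw [norm_smul, Real.norm_eq_abs, inv_sub_inv hx'.ne' hy'.ne', abs_div,
      abs_of_pos (mul_pos hx' hy'), div_mul_eq_mul_div, mul_comm ‖x‖ ‖y‖,
      mul_div_mul_right _ _ hx'.ne']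
    gcongr
    rw [abs_sub_comm]
    exact abs_norm_sub_norm_le x y
  calc ‖‖x‖⁻¹ • x - ‖y‖⁻¹ • y‖ = ‖(‖x‖⁻¹ - ‖y‖⁻¹) • x + ‖y‖⁻¹ • (x - y)‖ := by
        rw [sub_smul, smul_sub]; abel_nf
    _ ≤ ‖x - y‖ / ‖y‖ + ‖x - y‖ / ‖y‖ := by
        refine (norm_add_le _ _).trans (add_le_add hscale ?_)
        rw [norm_smul, norm_inv, norm_norm, inv_mul_eq_div]
    _ = 2 * ‖x - y‖ / ‖y‖ := by ring

section Covers

variable {X : Type*} [MetricSpace X] {ι : Type*}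

lemma IsLipschitzLC.mono {Y : Type*} [MetricSpace Y] {l l' C C' : ℝ} {f : X → Y}
    (hf : IsLipschitzLC l C f) (hl : l ≤ l') (hC : C ≤ C') : IsLipschitzLC l' C' f :=
  fun x y => (hf x y).trans (add_le_add (mul_le_mul_of_nonneg_right hl dist_nonneg) hC)

lemma UniformlyBounded.isBounded {U : ι → Set X} (hU : UniformlyBounded U) (i : ι) :
    Bornology.IsBounded (U i) :=
  let ⟨M, hM⟩ := hU
  isBounded_iff.2 ⟨M, hM i⟩

lemma UniformlyBounded.mono {U W : ι → Set X} (hU : UniformlyBounded U) (hWU : ∀ i, W i ⊆ U i) :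
    UniformlyBounded W :=
  let ⟨M, hM⟩ := hU
  ⟨M, fun i x hx y hy => hM i x (hWU i hx) y (hWU i hy)⟩

lemma exists_lt_infDist_compl_of_le_lebesgue {U : ι → Set X} (hU : ∀ i, (U i)ᶜ.Nonempty)
    {r R : ℝ} (hr : 0 ≤ r) (hrR : r < R) (hleb : ENNReal.ofReal R ≤ lebesgue U) (x : X) :
    ∃ i, r < infDist x (U i)ᶜ := by
  have hlt : ENNReal.ofReal r < ⨆ i, infEDist x (U i)ᶜ :=
    ((ENNReal.ofReal_lt_ofReal_iff (hr.trans_lt hrR)).2 hrR).trans_le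
      (hleb.trans (iInf_le _ x))
  obtain ⟨i, hi⟩ := lt_iSup_iff.1 hlt
  exact ⟨i, (ENNReal.ofReal_lt_iff_lt_toReal hr (infEDist_ne_top (hU i))).1 hi⟩

lemma subset_setOf_infDist_pos {s t : Set X} {M : ℝ} (hs : ∀ x ∈ s, ∀ y ∈ s, dist x y ≤ M)
    {x₀ : X} (hx₀ : x₀ ∈ s) (hM : M < infDist x₀ t) : s ⊆ {x | 0 < infDist x t} := fun x hx => by
  show 0 < infDist x t
  have := infDist_le_infDist_add_dist (x := x₀) (y := x) (s := t)
  linarith [hs x₀ hx₀ x hx]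

variable {U : ι → Set X} {m : ℕ}

lemma support_infDist_compl (x : X) :
    (support fun i => infDist x (U i)ᶜ) = {i | 0 < infDist x (U i)ᶜ} := by
  ext i
  exact infDist_nonneg.lt_iff_ne'.symm

lemma MultiplicityLE.finite_support_infDist (hU : MultiplicityLE U m) (x : X) :
    (support fun i => infDist x (U i)ᶜ).Finite := by
  rw [support_infDist_compl]
  exact (Set.encard_le_coe_iff_finite_ncard_le.1 (hU x)).1

lemma MultiplicityLE.ncard_support_infDist_le (hU : MultiplicityLE U m) (x : X) :
    (support fun i => infDist x (U i)ᶜ).ncard ≤ m := by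
  rw [support_infDist_compl]
  exact (Set.encard_le_coe_iff_finite_ncard_le.1 (hU x)).2

variable {κ : Type u} {V : κ → Set X}

def MultiplicityLE.infDistCompl (hV : MultiplicityLE V m) (x : X) : ellOne κ :=
  ellOne.ofFiniteSupport (fun v => infDist x (V v)ᶜ) (hV.finite_support_infDist x)

lemma MultiplicityLE.norm_infDistCompl_sub_le (hV : MultiplicityLE V m) (x y : X) :
    ‖hV.infDistCompl x - hV.infDistCompl y‖ ≤ 2 * m * dist x y := by
  have hsupp : support ⇑(hV.infDistCompl x - hV.infDistCompl y) ⊆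
      (support fun v => infDist x (V v)ᶜ) ∪ support fun v => infDist y (V v)ᶜ :=
    support_sub _ _
  have hfin := (hV.finite_support_infDist x).union (hV.finite_support_infDist y)
  have hcard : ((support ⇑(hV.infDistCompl x - hV.infDistCompl y)).ncard : ℝ) ≤ 2 * m := by
    have := (Set.ncard_le_ncard hsupp hfin).trans (Set.ncard_union_le _ _)
    have := hV.ncard_support_infDist_le x
    have := hV.ncard_support_infDist_le y
    norm_cast
    omega
  calc ‖hV.infDistCompl x - hV.infDistCompl y‖
      ≤ (support ⇑(hV.infDistCompl x - hV.infDistCompl y)).ncard * dist x y :=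
        ellOne.norm_le_ncard_mul (hfin.subset hsupp) fun v => by
          simpa [MultiplicityLE.infDistCompl, Real.dist_eq] using
            (lipschitz_infDist_pt (V v)ᶜ).dist_le_mul x y
    _ ≤ 2 * m * dist x y := by gcongr

lemma MultiplicityLE.le_norm_infDistCompl (hV : MultiplicityLE V m) {x : X} {v : κ} {r : ℝ}
    (hr : r ≤ infDist x (V v)ᶜ) : r ≤ ‖hV.infDistCompl x‖ :=
  hr.trans ((le_abs_self _).trans (lp.norm_apply_le_norm one_ne_zero (hV.infDistCompl x) v))

theorem MultiplicityLE.exists_lipschitz_fullSimplex (hV : MultiplicityLE V m) {r : ℝ} (hr : 0 < r)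
    (hleb : ∀ x, ∃ v, r ≤ infDist x (V v)ᶜ) :
    ∃ F : X → ellOne κ, (∀ x, F x ∈ fullSimplex κ) ∧ IsLipschitzLC (4 * m / r) 0 F ∧
      ∀ x v, 0 < F x v ↔ 0 < infDist x (V v)ᶜ := by
  set d := hV.infDistCompl
  have hnorm : ∀ x, r ≤ ‖d x‖ := fun x =>
    let ⟨_, hv⟩ := hleb x
    hV.le_norm_infDistCompl hv
  have hd0 : ∀ x, d x ≠ 0 := fun x => norm_pos_iff.1 (hr.trans_le (hnorm x))
  refine ⟨fun x => ‖d x‖⁻¹ • d x, fun x => ?_, fun x y => ?_, fun x v => ?_⟩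
  · exact ellOne.inv_norm_smul_mem_fullSimplex (hd0 x) (fun _ => infDist_nonneg)
      (hV.finite_support_infDist x)
  · rw [dist_eq_norm]
    calc ‖‖d x‖⁻¹ • d x - ‖d y‖⁻¹ • d y‖ ≤ 2 * ‖d x - d y‖ / ‖d y‖ :=
          norm_inv_norm_smul_sub_inv_norm_smul_le _ (hd0 y)
      _ ≤ 2 * (2 * m * dist x y) / r := by
          gcongr
          exacts [hV.norm_infDistCompl_sub_le x y, hnorm y]
      _ = 4 * m / r * dist x y + 0 := by ring
  · exact mul_pos_iff_of_pos_left (inv_pos.2 (norm_pos_iff.2 (hd0 x)))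

theorem MultiplicityLE.exists_lipschitz_fullSimplex_star_subset [Nonempty X]
    (hV : MultiplicityLE V m) {r : ℝ} (hr : 0 < r) (hleb : ∀ x, ∃ v, r < infDist x (V v)ᶜ) :
    ∃ F : X → ellOne κ, (∀ x, F x ∈ fullSimplex κ) ∧ IsLipschitzLC (4 * m / r) 0 F ∧
      (∀ v, F ⁻¹' star (fullSimplex κ) v ⊆ V v) ∧
      ∀ s : Set X, ∀ M < r, (∀ x ∈ s, ∀ y ∈ s, dist x y ≤ M) →
        ∃ v, s ⊆ F ⁻¹' star (fullSimplex κ) v := by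
  obtain ⟨F, hFmem, hFlip, hFpos⟩ :=
    hV.exists_lipschitz_fullSimplex hr fun x => (hleb x).imp fun _ => le_of_lt
  have hstar : ∀ v, F ⁻¹' star (fullSimplex κ) v = {x | 0 < infDist x (V v)ᶜ} := fun v => by
    ext x
    exact (and_iff_right (hFmem x)).trans (hFpos x v)
  refine ⟨F, hFmem, hFlip, fun v x hx => ?_, fun s M hMr hs => ?_⟩
  · by_contra hxV
    exact ((hFpos x v).1 hx.2).ne' (infDist_zero_of_mem hxV)
  · rcases s.eq_empty_or_nonempty with rfl | ⟨x₀, hx₀⟩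
    · obtain ⟨v, -⟩ := hleb (Classical.arbitrary X)
      exact ⟨v, Set.empty_subset _⟩
    · obtain ⟨v, hv⟩ := hleb x₀
      exact ⟨v, hstar v ▸ subset_setOf_infDist_pos hs hx₀ (hMr.trans hv)⟩

end Covers

theorem LSParacompact.of_boundedSpace (X : Type u) [MetricSpace X] [BoundedSpace X] :
    LSParacompact X := by
  intro ι U _ _ l C _ hC
  obtain ⟨M, hM⟩ := isBounded_iff.1 (BoundedSpace.bounded_univ (α := X))
  have hpt := ellOne.single_mem_fullSimplex PUnit.unit
  refine ⟨PUnit, fullSimplex PUnit, fun _ => lp.single 1 PUnit.unit 1,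
    fullSimplex_isSimplicialComplex PUnit, fun _ => hpt, fun x y => ?_,
    ⟨M, fun _ x _ y _ => hM (Set.mem_univ x) (Set.mem_univ y)⟩,
    fun _ => ⟨PUnit.unit, fun _ _ => ⟨hpt, ?_⟩⟩⟩
  · rw [dist_self]
    positivity
  · simp

/-- every metric space of finite asymptotic dimension is large scale
paracompact. -/
theorem lsParacompact_of_finite_asdim (X : Type u) [MetricSpace X]
    (h : ∃ n : ℕ, AsdimLE X n) : LSParacompact X := by
  obtain ⟨n, hasdim⟩ := h
  by_cases hbdd : BoundedSpace X
  · exact LSParacompact.of_boundedSpace X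
  have : Nonempty X := not_isEmpty_iff.1 fun _ => hbdd inferInstance
  intro ι U _ ⟨M, hM⟩ l C hl hC
  obtain ⟨r, hMr, hnr⟩ : ∃ r, M < r ∧ 4 * ((n + 1 : ℕ) : ℝ) / l < r :=
    (exists_gt _).imp fun _ => max_lt_iff.1
  have hr : 0 < r := (by positivity : (0 : ℝ) ≤ 4 * ((n + 1 : ℕ) : ℝ) / l).trans_lt hnr
  obtain ⟨κ, V, -, hVb, hVm, hVleb⟩ := hasdim (r + 1) (by linarith)
  -- unboundedness excludes `V v = X`, to which the multiplicity bound (via `infDist`) is blind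
  have hVc : ∀ v, (V v)ᶜ.Nonempty := fun v =>
    Set.nonempty_compl.2 fun hv => hbdd (Bornology.isBounded_univ.1 (hv ▸ hVb.isBounded v))
  obtain ⟨F, hFmem, hFlip, hFV, hFU⟩ := hVm.exists_lipschitz_fullSimplex_star_subset hr
    (exists_lt_infDist_compl_of_le_lebesgue hVc hr.le (lt_add_one r) hVleb)
  exact ⟨κ, fullSimplex κ, F, fullSimplex_isSimplicialComplex κ, hFmem,
    hFlip.mono ((div_le_comm₀ hr hl).2 hnr.le) hC.le, hVb.mono hFV,
    fun i => hFU (U i) M hMr (hM i)⟩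

end
end

section
/- A metric space X has Property A if and only if for each δ > 0 there exist a set S and a (δ,δ)-Lipschitz map f: X → Δ(S) such that the family {f⁻¹(st(s)) : s ∈ S} is uniformly bounded. -/
open Function Metric ENNReal

noncomputable section

/-!
A family `φ` as in Property A is the same thing as the map `x ↦ (φ s x)ₛ` into `Δ(S)`: the
variation `∑ₛ |φ s x - φ s y|` is the `ℓ¹` distance of the images and the preimage of `st(s)` is
the support of `φ s`. So it remains to trade "small variation at scale `R`" for
"`(δ, δ)`-Lipschitz". A `(δ, δ)`-Lipschitz map varies by at most `δ (R + 1)` at scale `R`;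
conversely, since `Δ(S)` has diameter `2`, a map with variation `δ` at scale `2 / δ` is
`(δ, δ)`-Lipschitz.
-/

namespace ellOne

variable {S : Type u}

lemma dist_eq (p q : ellOne S) : dist p q = ∑' s, |p s - q s| := by
  rw [dist_eq_norm, lp.norm_eq_tsum_rpow (by norm_num)]
  simp [Real.norm_eq_abs]

def ofFinite (g : S → ℝ) (hg : (support g).Finite) : ellOne S :=
  ⟨g, (memℓp_zero_iff.2 hg).of_exponent_ge zero_le_one⟩

end ellOne

section fullSimplex

variable {S : Type u} {p q : ellOne S}

lemma norm_eq_one_of_mem_fullSimplex (hp : p ∈ fullSimplex S) : ‖p‖ = 1 := by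
  rw [← dist_zero_right, ellOne.dist_eq, ← hp.2.2]
  exact tsum_congr fun s => by simp [abs_of_nonneg (hp.1 s)]

lemma dist_le_two_of_mem_fullSimplex (hp : p ∈ fullSimplex S) (hq : q ∈ fullSimplex S) :
    dist p q ≤ 2 := by
  calc dist p q ≤ ‖p‖ + ‖q‖ := by rw [dist_eq_norm]; exact norm_sub_le p q
    _ = 2 := by rw [norm_eq_one_of_mem_fullSimplex hp, norm_eq_one_of_mem_fullSimplex hq]; norm_num

lemma apply_le_one_of_mem_fullSimplex (hp : p ∈ fullSimplex S) (s : S) : p s ≤ 1 :=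
  hp.2.2 ▸ (summable_of_hasFiniteSupport hp.2.1).le_tsum s fun t _ => hp.1 t

lemma preimage_star_fullSimplex {X : Type*} {f : X → ellOne S} (hf : ∀ x, f x ∈ fullSimplex S)
    (s : S) : f ⁻¹' star (fullSimplex S) s = support fun x => f x s := by
  ext x
  exact ⟨fun hx => hx.2.ne', fun hx => ⟨hf x, ((hf x).1 s).lt_of_ne' hx⟩⟩

end fullSimplex

section Lipschitz

variable {X Y : Type*} [MetricSpace X] [MetricSpace Y] {f : X → Y}

lemma IsLipschitzLC.hasVariation {l C R ε : ℝ} (hf : IsLipschitzLC l C f) (hl : 0 ≤ l)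
    (hε : l * R + C < ε) : HasVariation R ε f := fun x y hxy =>
  calc dist (f x) (f y) ≤ l * dist x y + C := hf x y
    _ ≤ l * R + C := by gcongr
    _ < ε := hε

lemma isLipschitzLC_of_hasVariation {δ D : ℝ} (hδ : 0 < δ) (hD : ∀ x y, dist (f x) (f y) ≤ D)
    (hf : HasVariation (D / δ) δ f) : IsLipschitzLC δ δ f := by
  intro x y
  rcases le_or_gt (dist x y) (D / δ) with hxy | hxy
  · linarith [(hf x y hxy).le, mul_nonneg hδ.le (dist_nonneg (x := x) (y := y))]
  · calc dist (f x) (f y) ≤ D := hD x y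
      _ = δ * (D / δ) := by field_simp
      _ ≤ δ * dist x y + δ := by nlinarith

end Lipschitz

theorem propertyA_iff_exists_fullSimplex_hasVariation (X : Type u) [MetricSpace X] :
    PropertyA X ↔
      ∀ R ε : ℝ, 0 < R → 0 < ε → ∃ (S : Type u) (f : X → ellOne S),
        (∀ x, f x ∈ fullSimplex S) ∧ HasVariation R ε f ∧
        UniformlyBounded (fun s : S => f ⁻¹' star (fullSimplex S) s) := by
  constructor
  · intro hA R ε hR hε
    obtain ⟨M, S, φ, -, hφ01, hfin, hsum, hvar, hsupp⟩ := hA R ε hR hε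
    let f : X → ellOne S := fun x => ellOne.ofFinite (fun s => φ s x) (hfin x)
    have hf : ∀ x, f x ∈ fullSimplex S := fun x => ⟨fun s => (hφ01 s x).1, hfin x, hsum x⟩
    refine ⟨S, f, hf, fun x y hxy => ?_, M, fun s x hx y hy => ?_⟩
    · rw [ellOne.dist_eq]
      exact hvar x y hxy
    · simp only [preimage_star_fullSimplex hf] at hx hy
      exact hsupp s x hx y hy
  · intro h R ε hR hε
    obtain ⟨S, f, hf, hvar, M, hM⟩ := h R ε hR hε
    refine ⟨max M 1, S, fun s x => f x s, by positivity,
      fun s x => ⟨(hf x).1 s, apply_le_one_of_mem_fullSimplex (hf x) s⟩,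
      fun x => (hf x).2.1, fun x => (hf x).2.2, fun x y hxy => ?_, fun s x hx y hy => ?_⟩
    · rw [← ellOne.dist_eq]
      exact hvar x y hxy
    · rw [← preimage_star_fullSimplex hf] at hx hy
      exact (hM s x hx y hy).trans (le_max_left M 1)

/-- `X` has Property A iff for each `δ > 0` there is a `(δ, δ)`-Lipschitz
map `f : X → Δ(S)` with `{f⁻¹(st s)}` uniformly bounded. -/
theorem propertyA_iff_deltaLipschitzMaps (X : Type u) [MetricSpace X] :
    PropertyA X ↔
      ∀ δ : ℝ, 0 < δ → ∃ (S : Type u) (f : X → ellOne S),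
        (∀ x, f x ∈ fullSimplex S) ∧ IsLipschitzLC δ δ f ∧
        UniformlyBounded (fun s : S => f ⁻¹' star (fullSimplex S) s) := by
  rw [propertyA_iff_exists_fullSimplex_hasVariation]
  constructor
  · intro h δ hδ
    obtain ⟨S, f, hf, hvar, hbdd⟩ := h (2 / δ) δ (by positivity) hδ
    exact ⟨S, f, hf, isLipschitzLC_of_hasVariation hδ
      (fun x y => dist_le_two_of_mem_fullSimplex (hf x) (hf y)) hvar, hbdd⟩
  · intro h R ε hR hε
    obtain ⟨S, f, hf, hlip, hbdd⟩ := h (ε / (R + 2)) (by positivity)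
    refine ⟨S, f, hf, hlip.hasVariation (by positivity) ?_, hbdd⟩
    calc ε / (R + 2) * R + ε / (R + 2) = ε / (R + 2) * (R + 1) := by ring
      _ < ε / (R + 2) * (R + 2) := by gcongr; linarith
      _ = ε := by field_simp

end
end
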